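/- arXiv:0803.0355 — 2 statements merged into one kernel-verified Lean document; each statement's English description precedes it below -/
import Mathlib

section
/- Let u, v be elements of a real inner product space with v ≠ 0, and let 0 ≤ α < 1, β = (1-α²)^{-1/2}. Then the condition |⟨u, v⟩| ≤ α‖u‖·‖v‖ holds if and only if ‖u‖ ≤ β·inf over t ∈ ℝ of ‖u - t·v‖. -/
/-!
Completing the square, `‖v‖²‖u - t v‖² = (‖u‖²‖v‖² - ⟪u,v⟫²) + (t‖v‖² - ⟪u,v⟫)²`, so the squared
distance from `u` to the line `ℝ v` is `‖u‖² - ⟪u,v⟫²/‖v‖²`. After squaring, both sides of the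
equivalence say `⟪u,v⟫² ≤ α²‖u‖²‖v‖²`.
-/

open scoped RealInnerProductSpace

section DistToLine

variable {E : Type*} [NormedAddCommGroup E] [InnerProductSpace ℝ E]

theorem norm_sub_smul_sq_mul_norm_sq (u v : E) (t : ℝ) :
    ‖u - t • v‖ ^ 2 * ‖v‖ ^ 2 = (‖u‖ ^ 2 * ‖v‖ ^ 2 - ⟪u, v⟫ ^ 2) + (t * ‖v‖ ^ 2 - ⟪u, v⟫) ^ 2 := by
  rw [norm_sub_sq_real, real_inner_smul_right, norm_smul, Real.norm_eq_abs, mul_pow, sq_abs]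
  ring

theorem iInf_norm_sub_smul_eq (u v : E) (hv : v ≠ 0) :
    ⨅ t : ℝ, ‖u - t • v‖ = ‖u - (⟪u, v⟫ / ‖v‖ ^ 2) • v‖ := by
  have hv2 : 0 < ‖v‖ ^ 2 := by positivity
  have hmin (t : ℝ) : ‖u - (⟪u, v⟫ / ‖v‖ ^ 2) • v‖ ≤ ‖u - t • v‖ := by
    refine (pow_le_pow_iff_left₀ (norm_nonneg _) (norm_nonneg _) two_ne_zero).mp ?_
    refine le_of_mul_le_mul_right ?_ hv2
    rw [norm_sub_smul_sq_mul_norm_sq, norm_sub_smul_sq_mul_norm_sq, div_mul_cancel₀ _ hv2.ne']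
    nlinarith [sq_nonneg (t * ‖v‖ ^ 2 - ⟪u, v⟫)]
  exact le_antisymm (ciInf_le ⟨0, by rintro _ ⟨t, rfl⟩; positivity⟩ _) (le_ciInf hmin)

theorem sq_iInf_norm_sub_smul_mul_norm_sq (u v : E) (hv : v ≠ 0) :
    (⨅ t : ℝ, ‖u - t • v‖) ^ 2 * ‖v‖ ^ 2 = ‖u‖ ^ 2 * ‖v‖ ^ 2 - ⟪u, v⟫ ^ 2 := by
  have hv2 : ‖v‖ ^ 2 ≠ 0 := by positivity
  rw [iInf_norm_sub_smul_eq u v hv, norm_sub_smul_sq_mul_norm_sq, div_mul_cancel₀ _ hv2]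
  ring

end DistToLine

/-- For `v ≠ 0`, `0 ≤ α < 1` and `β = (1-α²)^{-1/2}`, the angle condition
`|⟨u,v⟩| ≤ α‖u‖‖v‖` is equivalent to `‖u‖ ≤ β · inf_{t∈ℝ} ‖u - t v‖`. -/
theorem angle_condition_iff_dist_to_line
    {E : Type*} [NormedAddCommGroup E] [InnerProductSpace ℝ E]
    (u v : E) (hv : v ≠ 0) (α : ℝ) (hα₀ : 0 ≤ α) (hα₁ : α < 1) :
    |⟪u, v⟫| ≤ α * ‖u‖ * ‖v‖ ↔
      ‖u‖ ≤ (Real.sqrt (1 - α ^ 2))⁻¹ * ⨅ t : ℝ, ‖u - t • v‖ := by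
  set d := ⨅ t : ℝ, ‖u - t • v‖
  have hd : d ^ 2 * ‖v‖ ^ 2 = ‖u‖ ^ 2 * ‖v‖ ^ 2 - ⟪u, v⟫ ^ 2 :=
    sq_iInf_norm_sub_smul_mul_norm_sq u v hv
  have hd₀ : 0 ≤ d := Real.iInf_nonneg fun _ ↦ norm_nonneg _
  have hs : 0 ≤ 1 - α ^ 2 := by nlinarith
  have hβ : 0 < Real.sqrt (1 - α ^ 2) := Real.sqrt_pos.mpr (by nlinarith)
  have hv2 : 0 < ‖v‖ ^ 2 := by positivity
  calc |⟪u, v⟫| ≤ α * ‖u‖ * ‖v‖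
      ↔ ⟪u, v⟫ ^ 2 ≤ (α * ‖u‖ * ‖v‖) ^ 2 := by
        rw [sq_le_sq, abs_of_nonneg (by positivity : 0 ≤ α * ‖u‖ * ‖v‖)]
    _ ↔ (1 - α ^ 2) * ‖u‖ ^ 2 * ‖v‖ ^ 2 ≤ d ^ 2 * ‖v‖ ^ 2 := by
        rw [hd]; constructor <;> intro h <;> nlinarith
    _ ↔ (Real.sqrt (1 - α ^ 2) * ‖u‖) ^ 2 ≤ d ^ 2 := by
        rw [mul_pow, Real.sq_sqrt hs, mul_le_mul_iff_of_pos_right hv2]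
    _ ↔ Real.sqrt (1 - α ^ 2) * ‖u‖ ≤ d := pow_le_pow_iff_left₀ (by positivity) hd₀ two_ne_zero
    _ ↔ ‖u‖ ≤ (Real.sqrt (1 - α ^ 2))⁻¹ * d := (le_inv_mul_iff₀ hβ).symm
end

section
/- Let V be a finite-dimensional subspace of a Hilbert space H consisting of (equivalence classes of) functions, closed under the property that D(v) = 0 for all v ∈ V, and suppose the seminorm u ↦ ‖D(u)‖ satisfies: any bounded sequence uₙ in a Banach space E compactly embedded in H with ‖D(uₙ)‖ → 0 has a subsequence converging in H to some element of V. If additionally ‖u‖_E ≤ C(‖u‖_H + ‖D(u)‖) for all u ∈ E, then there is C' such that for every u ∈ E orthogonal (in H) to V: ‖u‖_E ≤ C'‖D(u)‖. -/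
open Filter Topology
open scoped RealInnerProductSpace

/-!
If the second inequality failed, normalising a sequence of counterexamples would give
unit vectors `wₙ`, orthogonal to `ι V`, with `D wₙ → 0`. By compactness a subsequence of
`ι wₙ` converges to some `ι v` with `v ∈ V`; orthogonality passes to the limit, so
`ι v ⟂ ι v` and the limit is `0`. The first inequality then forces `‖wₙ‖ → 0` along the
subsequence, contradicting `‖wₙ‖ = 1`.
-/

theorem eq_zero_of_tendsto_of_inner_eq_zero {𝕜 H α : Type*} [RCLike 𝕜] [NormedAddCommGroup H]
    [InnerProductSpace 𝕜 H] {l : Filter α} [l.NeBot] {x : α → H} {y : H}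
    (hx : Tendsto x l (𝓝 y)) (horth : ∀ᶠ a in l, inner 𝕜 (x a) y = 0) : y = 0 := by
  have hclosed : IsClosed {z : H | inner 𝕜 z y = 0} :=
    isClosed_eq (continuous_id.inner continuous_const) continuous_const
  exact inner_self_eq_zero.mp (hclosed.mem_of_tendsto hx horth)

theorem tendsto_norm_zero_of_norm_le_mul_add {α E H F : Type*} [SeminormedAddCommGroup E]
    [SeminormedAddCommGroup H] [SeminormedAddCommGroup F] {ι : E → H} {D : E → F} {C : ℝ}
    (hle : ∀ u, ‖u‖ ≤ C * (‖ι u‖ + ‖D u‖)) {l : Filter α} {w : α → E}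
    (hι : Tendsto (fun a => ι (w a)) l (𝓝 0))
    (hD : Tendsto (fun a => ‖D (w a)‖) l (𝓝 0)) :
    Tendsto (fun a => ‖w a‖) l (𝓝 0) := by
  have hbound : Tendsto (fun a => C * (‖ι (w a)‖ + ‖D (w a)‖)) l (𝓝 0) := by
    simpa using (hι.norm.add hD).const_mul C
  exact squeeze_zero (fun _ => norm_nonneg _) (fun a => hle (w a)) hbound

theorem exists_seq_norm_eq_one_tendsto_zero_of_not_bounded {E F : Type*}
    [NormedAddCommGroup E] [NormedSpace ℝ E] [NormedAddCommGroup F] [NormedSpace ℝ F]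
    (D : E →ₗ[ℝ] F) (S : Submodule ℝ E)
    (h : ¬∃ C : ℝ, 0 < C ∧ ∀ u ∈ S, ‖u‖ ≤ C * ‖D u‖) :
    ∃ w : ℕ → E, (∀ n, w n ∈ S) ∧ (∀ n, ‖w n‖ = 1) ∧
      Tendsto (fun n => ‖D (w n)‖) atTop (𝓝 0) := by
  push Not at h
  choose u huS hlt using fun n : ℕ => h ((n : ℝ) + 1) (by positivity)
  have hpos : ∀ n, 0 < ‖u n‖ := fun n =>
    (mul_nonneg (by positivity) (norm_nonneg _)).trans_lt (hlt n)
  refine ⟨fun n => ‖u n‖⁻¹ • u n, fun n => S.smul_mem _ (huS n), fun n => ?_, ?_⟩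
  · rw [norm_smul, norm_inv, norm_norm, inv_mul_cancel₀ (hpos n).ne']
  · refine squeeze_zero (fun _ => norm_nonneg _) (fun n => ?_)
      tendsto_one_div_add_atTop_nhds_zero_nat
    rw [map_smul, norm_smul, norm_inv, norm_norm, inv_mul_le_iff₀ (hpos n), mul_one_div,
      le_div_iff₀ (by positivity), mul_comm]
    exact (hlt n).le

theorem abstract_korn_second_inequality_general
    {E H F : Type*}
    [NormedAddCommGroup E] [NormedSpace ℝ E]
    [NormedAddCommGroup H] [InnerProductSpace ℝ H]
    [NormedAddCommGroup F] [NormedSpace ℝ F]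
    (ι : E →L[ℝ] H)
    (D : E →L[ℝ] F)
    (V : Submodule ℝ E)
    (hcompact : ∀ u : ℕ → E, (∃ M : ℝ, ∀ k, ‖u k‖ ≤ M) →
      Tendsto (fun k => ‖D (u k)‖) atTop (𝓝 0) →
      ∃ φ : ℕ → ℕ, StrictMono φ ∧ ∃ v ∈ V,
        Tendsto (fun k => ι (u (φ k))) atTop (𝓝 (ι v)))
    (C : ℝ)
    (hfirst : ∀ u : E, ‖u‖ ≤ C * (‖ι u‖ + ‖D u‖)) :
    ∃ C' : ℝ, 0 < C' ∧ ∀ u : E,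
      (∀ v ∈ V, ⟪ι u, ι v⟫ = 0) → ‖u‖ ≤ C' * ‖D u‖ := by
  set S : Submodule ℝ E := (V.map (ι : E →ₗ[ℝ] H))ᗮ.comap (ι : E →ₗ[ℝ] H)
  have hS : ∀ u, u ∈ S ↔ ∀ v ∈ V, ⟪ι u, ι v⟫ = 0 := by
    simp [S, Submodule.mem_orthogonal']
  by_contra hbad
  obtain ⟨w, hwS, hw1, hDw⟩ := exists_seq_norm_eq_one_tendsto_zero_of_not_bounded
    (D : E →ₗ[ℝ] F) S (by simpa [hS] using hbad)
  obtain ⟨φ, hφ, v, hv, hlim⟩ := hcompact w ⟨1, fun k => (hw1 k).le⟩ hDw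
  have hιv : ι v = 0 := eq_zero_of_tendsto_of_inner_eq_zero hlim
    (Eventually.of_forall fun k => (hS _).mp (hwS (φ k)) v hv)
  have hw0 := tendsto_norm_zero_of_norm_le_mul_add hfirst (hιv ▸ hlim)
    (hDw.comp hφ.tendsto_atTop)
  simp only [hw1] at hw0
  exact one_ne_zero (tendsto_const_nhds_iff.mp hw0)

/-- Abstract Korn-type inequality via compactness: `E ↪ H` with embedding `ι`,
`D : E → F` bounded linear with finite-dimensional kernel `V`; if bounded
sequences with `‖D uₙ‖ → 0` have subsequences converging in `H` to elements of
`V` (compactness), and the first Korn inequality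
`‖u‖_E ≤ C(‖ι u‖_H + ‖D u‖)` holds, then the second Korn inequality
`‖u‖_E ≤ C' ‖D u‖` holds for all `u` orthogonal (in `H`) to `V`. -/
theorem abstract_korn_second_inequality
    {E H F : Type*}
    [NormedAddCommGroup E] [NormedSpace ℝ E] [CompleteSpace E]
    [NormedAddCommGroup H] [InnerProductSpace ℝ H] [CompleteSpace H]
    [NormedAddCommGroup F] [NormedSpace ℝ F]
    (ι : E →L[ℝ] H) (hι : Function.Injective ι)
    (D : E →L[ℝ] F)
    (V : Submodule ℝ E) (hVker : ∀ v : E, v ∈ V ↔ D v = 0)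
    (hVfd : FiniteDimensional ℝ V)
    (hcompact : ∀ u : ℕ → E, (∃ M : ℝ, ∀ k, ‖u k‖ ≤ M) →
      Tendsto (fun k => ‖D (u k)‖) atTop (𝓝 0) →
      ∃ φ : ℕ → ℕ, StrictMono φ ∧ ∃ v ∈ V,
        Tendsto (fun k => ι (u (φ k))) atTop (𝓝 (ι v)))
    (C : ℝ) (hC : 0 < C)
    (hfirst : ∀ u : E, ‖u‖ ≤ C * (‖ι u‖ + ‖D u‖)) :
    ∃ C' : ℝ, 0 < C' ∧ ∀ u : E,
      (∀ v ∈ V, ⟪ι u, ι v⟫ = 0) → ‖u‖ ≤ C' * ‖D u‖ :=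
  abstract_korn_second_inequality_general ι D V hcompact C hfirst
end
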